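/- (Type 3 reserve preimage) Let A be a noncomputable c.e. D-maximal set (superset formulation: for every c.e. W ⊇ A, either W \ A is c.e. or there is a computable R with A ⊆ R ⊆ W), and let K ⊆ Aᶜ be an infinite noncomputable c.e. set such that every c.e. set disjoint from A is almost contained in K. Then for every c.e. B ≡_m A and every many-one reduction f : B ≤_m A, the set f⁻¹(K) is infinite. -/

import Mathlib

open Set

/-- A many-one reduction from `A` to `B`: a total computable function preserving membership. -/
def ManyOneRed (h : ℕ → ℕ) (A B : Set ℕ) : Prop :=
  Computable h ∧ ∀ x, x ∈ A ↔ h x ∈ B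

/-- Many-one equivalence of sets of naturals. -/
def MEquiv (A B : Set ℕ) : Prop :=
  (∃ h, ManyOneRed h A B) ∧ (∃ f, ManyOneRed f B A)

/-- Finite-one reducibility: a many-one reduction all of whose fibres are finite. -/
def FORed (A B : Set ℕ) : Prop :=
  ∃ g : ℕ → ℕ, Computable g ∧ (∀ x, x ∈ A ↔ g x ∈ B) ∧ ∀ y, (g ⁻¹' {y}).Finite

/-- The set of negative duplicates of a reduction `h` with respect to `A`. -/
def Dh (A : Set ℕ) (h : ℕ → ℕ) : Set ℕ :=
  {x | x ∉ A ∧ ∃ y < x, y ∉ A ∧ h y = h x}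

/- Auxiliary lemmas -/

theorem myREPred.or {p q : ℕ → Prop} (hp : REPred p) (hq : REPred q) :
    REPred fun a => p a ∨ q a := by
  obtain ⟨k, pk, hk⟩ := Partrec.merge hp hq (by
    intro a x hx y hy
    simp at hx hy; rfl)
  refine pk.dom_re.of_eq fun a => ?_
  rw [Part.dom_iff_mem]
  constructor
  · rintro ⟨u, hu⟩
    rcases (hk a u).1 hu with h | h <;> simp [Part.mem_assert_iff] at h
    · exact Or.inl h
    · exact Or.inr h
  · rintro (h | h)
    · exact ⟨(), (hk a ()).2 (Or.inl (by simp [Part.mem_assert_iff, h]))⟩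
    · exact ⟨(), (hk a ()).2 (Or.inr (by simp [Part.mem_assert_iff, h]))⟩

theorem myRange_re {f : ℕ → ℕ} (hf : Computable f) : REPred fun x => ∃ n, f n = x := by
  have hc : Computable₂ fun (x n : ℕ) => decide (f n = x) := by
    have := (Primrec.eq (α := ℕ)).decide.to_comp
    exact this.comp (hf.comp Computable.snd) Computable.fst
  have hpr : Partrec fun x => Nat.rfind fun n => (Part.some (decide (f n = x)) : Part Bool) :=
    Partrec.rfind (hc.partrec₂)
  refine hpr.dom_re.of_eq fun x => ?_
  refine Nat.rfind_dom.trans ?_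
  constructor
  · rintro ⟨n, hn, -⟩
    simp at hn
    exact ⟨n, hn⟩
  · rintro ⟨n, hn⟩
    exact ⟨n, by simp [hn], fun {m} _ => trivial⟩

theorem myComputablePred.or {p q : ℕ → Prop} (hp : ComputablePred p) (hq : ComputablePred q) :
    ComputablePred fun a => p a ∨ q a := by
  obtain ⟨fp, hfp, rfl⟩ := ComputablePred.computable_iff.1 hp
  obtain ⟨fq, hfq, rfl⟩ := ComputablePred.computable_iff.1 hq
  refine ComputablePred.computable_iff.2 ⟨fun a => fp a || fq a, ?_, by
    funext a; simp⟩
  exact (hfp.cond (Computable.const true) hfq).of_eq fun a => by cases fp a <;> simp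

theorem myComputablePred.and {p q : ℕ → Prop} (hp : ComputablePred p) (hq : ComputablePred q) :
    ComputablePred fun a => p a ∧ q a := by
  have := (myComputablePred.or hp.not hq.not).not
  exact this.of_eq fun a => by tauto

theorem myFinite_computable {S : Set ℕ} (hS : S.Finite) : ComputablePred (· ∈ S) := by
  lift S to Finset ℕ using hS
  induction S using Finset.induction_on with
  | empty => exact (ComputablePred.computable_iff.2
      ⟨fun _ => false, Computable.const false, by funext a; simp⟩)
  | @insert a T _ ih =>
    have ha : ComputablePred fun x : ℕ => x = a := by
      refine ⟨by infer_instance, ?_⟩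
      exact (Primrec.eq.comp Primrec.id (Primrec.const a)).decide.to_comp
    have := myComputablePred.or ha ih
    exact this.of_eq fun x => by simp [Finset.mem_insert]

theorem myComputablePred.comp {p : ℕ → Prop} (hp : ComputablePred p) {f : ℕ → ℕ}
    (hf : Computable f) : ComputablePred fun x => p (f x) := by
  obtain ⟨g, hg, rfl⟩ := ComputablePred.computable_iff.1 hp
  exact ComputablePred.computable_iff.2 ⟨fun x => g (f x), hg.comp hf, rfl⟩

/-- Type 3 reserve preimage. -/
theorem type3_reserve_preimage (A : Set ℕ)
    (hAce : REPred (· ∈ A)) (hAnc : ¬ComputablePred (· ∈ A))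
    (hDmax : ∀ W : Set ℕ, REPred (· ∈ W) → A ⊆ W →
      REPred (· ∈ W \ A) ∨ ∃ R : Set ℕ, ComputablePred (· ∈ R) ∧ A ⊆ R ∧ R ⊆ W)
    (K : Set ℕ) (hKce : REPred (· ∈ K)) (hKinf : K.Infinite)
    (hKnc : ¬ComputablePred (· ∈ K)) (hKsub : K ⊆ Aᶜ)
    (hgen : ∀ D : Set ℕ, REPred (· ∈ D) → Disjoint D A → (D \ K).Finite) :
    ∀ B : Set ℕ, REPred (· ∈ B) → MEquiv A B → ∀ f : ℕ → ℕ, ManyOneRed f B A →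
      (f ⁻¹' K).Infinite := by
  intro B hBce hequiv f hred
  obtain ⟨hf, hfmem⟩ := hred
  obtain ⟨⟨h, hh, hhmem⟩, -⟩ := hequiv
  by_contra hfin
  rw [Set.not_infinite] at hfin
  -- range f ∩ K is finite
  have hrK : (Set.range f ∩ K).Finite := by
    refine (hfin.image f).subset ?_
    rintro x ⟨⟨n, rfl⟩, hxK⟩
    exact ⟨n, hxK, rfl⟩
  -- W = A ∪ range f
  set W : Set ℕ := A ∪ Set.range f with hW
  have hWce : REPred (· ∈ W) := by
    have := myREPred.or hAce (myRange_re hf)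
    exact this.of_eq fun x => by
      simp [hW, Set.mem_union, Set.mem_range, eq_comm]
  have hAW : A ⊆ W := Set.subset_union_left
  rcases hDmax W hWce hAW with hce | ⟨R, hRc, hAR, hRW⟩
  · -- Case 1: W \ A is c.e.; then range f \ A is finite and B is computable
    have hdisj : Disjoint (W \ A) A := Set.disjoint_left.2 fun x hx => hx.2
    have h1 : ((W \ A) \ K).Finite := hgen _ hce hdisj
    have hFfin : (Set.range f \ A).Finite := by
      refine (h1.union hrK).subset ?_
      intro x hx
      by_cases hk : x ∈ K
      · exact Or.inr ⟨hx.1, hk⟩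
      · exact Or.inl ⟨⟨Or.inr hx.1, hx.2⟩, hk⟩
    have hBc : ComputablePred (· ∈ B) := by
      have hFc := (myFinite_computable hFfin).not
      have := myComputablePred.comp hFc hf
      refine this.of_eq fun x => ?_
      simp only [Set.mem_diff, Set.mem_range, not_and, not_not]
      constructor
      · intro hx; exact (hfmem x).2 (hx ⟨x, rfl⟩)
      · intro hx _; exact (hfmem x).1 hx
    exact hAnc ((myComputablePred.comp hBc hh).of_eq fun x => (hhmem x).symm)
  · -- Case 2: computable R with A ⊆ R ⊆ W; then K is computable
    have hRcompl_ce : REPred (· ∈ Rᶜ) := hRc.not.to_re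
    have hdisj : Disjoint Rᶜ A := Set.disjoint_left.2 fun x hx hxA => hx (hAR hxA)
    have hF1 : (Rᶜ \ K).Finite := hgen _ hRcompl_ce hdisj
    have hF2 : (R ∩ K).Finite := by
      refine hrK.subset ?_
      rintro x ⟨hxR, hxK⟩
      rcases hRW hxR with hxA | hxr
      · exact absurd hxA (hKsub hxK)
      · exact ⟨hxr, hxK⟩
    have hKc : ComputablePred (· ∈ K) := by
      have c1 := myComputablePred.and hRc.not (myFinite_computable hF1).not
      have := myComputablePred.or c1 (myFinite_computable hF2)
      refine this.of_eq fun x => ?_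
      simp only [Set.mem_diff, Set.mem_compl_iff, Set.mem_inter_iff, not_and, not_not]
      constructor
      · rintro (⟨hxR, hxK⟩ | ⟨-, hxK⟩)
        · exact hxK hxR
        · exact hxK
      · intro hxK
        by_cases hxR : x ∈ R
        · exact Or.inr ⟨hxR, hxK⟩
        · exact Or.inl ⟨hxR, fun _ => hxK⟩
    exact hKnc hKc
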